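/- Let k and ℓ be integers with 1 ≤ ℓ ≤ k/2 (i.e., 2ℓ ≤ k), and let n ≡ ℓ (mod k−ℓ). Then R̂(P^(k)_{n,ℓ}) ≤ R̂(P_n), where R̂(P_n) is the (2-uniform) size-Ramsey number of the path graph P_n on n vertices. -/

import Mathlib

/-- A `k`-uniform hypergraph on a finite vertex set of naturals:
each edge is a `k`-element subset of the vertex set. -/
structure UniformHypergraph (k : ℕ) where
  verts : Finset ℕ
  edges : Finset (Finset ℕ)
  card_eq : ∀ e ∈ edges, e.card = k
  subset_verts : ∀ e ∈ edges, e ⊆ verts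

namespace UniformHypergraph

/-- `H.IsCopy G f` : the injection `f` embeds `G` into `H` as a subhypergraph. -/
def IsCopy {k : ℕ} (H G : UniformHypergraph k) (f : ℕ → ℕ) : Prop :=
  Set.InjOn f ↑G.verts ∧ Set.MapsTo f ↑G.verts ↑H.verts ∧
    ∀ e ∈ G.edges, e.image f ∈ H.edges

/-- `H.Arrows G` : every 2-coloring of the edges of `H` yields a monochromatic copy of `G`. -/
def Arrows {k : ℕ} (H G : UniformHypergraph k) : Prop :=
  ∀ χ : Finset ℕ → Bool, ∃ (f : ℕ → ℕ) (c : Bool),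
    H.IsCopy G f ∧ ∀ e ∈ G.edges, χ (e.image f) = c

/-- The size-Ramsey number `R̂(G)`: the least number of edges of a hypergraph `H` with `H → G`. -/
noncomputable def sizeRamsey {k : ℕ} (G : UniformHypergraph k) : ℕ :=
  sInf { m | ∃ H : UniformHypergraph k, H.Arrows G ∧ H.edges.card = m }

/-- The complete `k`-uniform hypergraph on `N` vertices. -/
def completeHG (k N : ℕ) : UniformHypergraph k where
  verts := Finset.range N
  edges := Finset.powersetCard k (Finset.range N)
  card_eq := fun _ he => (Finset.mem_powersetCard.mp he).2
  subset_verts := fun _ he => (Finset.mem_powersetCard.mp he).1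

/-- The Ramsey number `R(G)`: the least `N` with `K_N^(k) → G`. -/
noncomputable def ramsey {k : ℕ} (G : UniformHypergraph k) : ℕ :=
  sInf { N | (completeHG k N).Arrows G }

end UniformHypergraph

/-- The `ℓ`-path `P^(k)_{n,ℓ}`: vertex set `{1,…,n}`, edges are the intervals
`{(i−1)(k−ℓ)+1, …, (i−1)(k−ℓ)+k}` for `i = 1, …, (n−ℓ)/(k−ℓ)`. -/
def pathHG (k ℓ n : ℕ) : UniformHypergraph k where
  verts := Finset.Icc 1 n
  edges := Finset.image (fun i => Finset.Icc (i * (k - ℓ) + 1) (i * (k - ℓ) + k))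
    (Finset.range ((n - ℓ) / (k - ℓ)))
  card_eq := by
    intro e he
    simp only [Finset.mem_image, Finset.mem_range] at he
    obtain ⟨i, _, rfl⟩ := he
    rw [Nat.card_Icc]
    omega
  subset_verts := by
    intro e he
    simp only [Finset.mem_image, Finset.mem_range] at he
    obtain ⟨i, hi, rfl⟩ := he
    intro x hx
    simp only [Finset.mem_Icc] at hx ⊢
    rcases le_or_gt k ℓ with hkl | hkl
    · rw [Nat.sub_eq_zero_of_le hkl, Nat.div_zero] at hi
      omega
    · have h2 : i * (k - ℓ) + (k - ℓ) ≤ n - ℓ := by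
        calc i * (k - ℓ) + (k - ℓ) = (i + 1) * (k - ℓ) := by ring
          _ ≤ ((n - ℓ) / (k - ℓ)) * (k - ℓ) := Nat.mul_le_mul_right _ hi
          _ ≤ n - ℓ := Nat.div_mul_le_self _ _
      omega

/-!
Replace every vertex of a graph `H` by `ℓ` copies and enlarge every edge `{u, v}` by `k - 2ℓ`
new vertices of its own. A 2-colouring of the resulting `k`-graph is a 2-colouring of the edges
of `H`, and the blow-ups of consecutive edges of a path share exactly the `ℓ` copies of the
common vertex, so a monochromatic `P_n` in `H` becomes a monochromatic `ℓ`-path on `n` vertices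
once `n ≡ ℓ (mod k - ℓ)`. Hence every graph arrowing `P_n` gives a `k`-graph with at most as many
edges arrowing `P^(k)_{n,ℓ}`. That `R̂(P_n)` is attained at all follows from `K_{2n} → P_n`: the
vertices of a 2-coloured complete graph split into a red path and a blue path.
-/

theorem Nat.div_le_of_lt_mul_add {x m d ℓ : ℕ} (hℓ : ℓ ≤ d) (h : x < m * d + ℓ) :
    x / d ≤ m := by
  have hd : 0 < d := Nat.pos_of_ne_zero fun hd => by subst hd; omega
  exact Nat.lt_succ_iff.1 <| (Nat.div_lt_iff_lt_mul hd).2 <| by rw [Nat.succ_mul]; omega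

theorem Nat.div_lt_of_lt_mul_add {x m d ℓ : ℕ} (h : x < m * d + ℓ) (hr : ℓ ≤ x % d) :
    x / d < m :=
  Nat.lt_of_mul_lt_mul_right (a := d) <| by
    have := Nat.div_add_mod' x d
    omega

theorem List.exists_isChain_append_isChain_not_perm {α : Type*} {r : α → α → Prop}
    (hr : ∀ a b, r a b → r b a) (L : List α) :
    ∃ R B : List α, R.IsChain r ∧ B.IsChain (fun a b => ¬ r a b) ∧ (R ++ B).Perm L := by
  induction L with
  | nil => exact ⟨[], [], .nil, .nil, .nil⟩
  | cons a L ih =>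
    obtain ⟨R, B, hR, hB, hperm⟩ := ih
    suffices ∃ R' B' : List α, R'.IsChain r ∧ B'.IsChain (fun a b => ¬ r a b) ∧
        (R' ++ B').Perm (a :: (R ++ B)) by
      obtain ⟨R', B', hR', hB', hperm'⟩ := this
      exact ⟨R', B', hR', hB', hperm'.trans (hperm.cons a)⟩
    rcases R with _ | ⟨x, R⟩
    · exact ⟨[a], B, .singleton a, hB, .refl _⟩
    rcases B with _ | ⟨y, B⟩
    · exact ⟨x :: R, [a], hR, .singleton a, List.perm_middle⟩
    by_cases hax : r a x
    · exact ⟨a :: x :: R, y :: B, hR.cons_cons hax, hB, .refl _⟩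
    by_cases hay : ¬ r a y
    · exact ⟨x :: R, a :: y :: B, hR, hB.cons_cons hay, List.perm_middle⟩
    rw [not_not] at hay
    -- `a` extends neither path: the colour of `{x, y}` decides which path takes `a` together
    -- with the first vertex of the other one.
    by_cases hxy : r x y
    · exact ⟨a :: y :: x :: R, B, (hR.cons_cons (hr x y hxy)).cons_cons hay, hB.tail,
        .cons a List.perm_middle.symm⟩
    · exact ⟨R, a :: x :: y :: B, hR.tail, (hB.cons_cons hxy).cons_cons hax,
        List.perm_middle.trans (.cons a List.perm_middle)⟩

theorem mem_pathHG_two_one_edges {n : ℕ} {e : Finset ℕ} :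
    e ∈ (pathHG 2 1 n).edges ↔ ∃ i, i + 2 ≤ n ∧ {i + 1, i + 2} = e := by
  have hIcc : ∀ i : ℕ, Finset.Icc (i + 1) (i + 2) = {i + 1, i + 2} := fun i => by
    ext x
    simp only [Finset.mem_Icc, Finset.mem_insert, Finset.mem_singleton]
    omega
  simp only [pathHG, Nat.add_one_sub_one, mul_one, Nat.div_one, Finset.mem_image,
    Finset.mem_range, hIcc]
  exact exists_congr fun i => and_congr_left' (by omega)

theorem mem_pathHG_edges {d ℓ m : ℕ} (hd : 0 < d) {e : Finset ℕ} :
    e ∈ (pathHG (d + ℓ) ℓ (m * d + ℓ)).edges ↔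
      ∃ i < m, Finset.Icc (i * d + 1) (i * d + d + ℓ) = e := by
  simp [pathHG, Nat.mul_div_cancel _ hd, add_assoc]

theorem exists_mem_edges_pathHG {d ℓ m x : ℕ} (hd : 0 < d) (hm : 0 < m)
    (hx : x ∈ (pathHG (d + ℓ) ℓ (m * d + ℓ)).verts) :
    ∃ e ∈ (pathHG (d + ℓ) ℓ (m * d + ℓ)).edges, x ∈ e := by
  simp only [mem_pathHG_edges hd, exists_exists_and_eq_and, Finset.mem_Icc]
  simp only [pathHG, Finset.mem_Icc] at hx
  by_cases hxm : x ≤ m * d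
  · have hq : (x - 1) / d < m := (Nat.div_lt_iff_lt_mul hd).2 (by omega)
    have := Nat.div_add_mod' (x - 1) d
    have := Nat.mod_lt (x - 1) hd
    exact ⟨(x - 1) / d, hq, by omega, by omega⟩
  · obtain ⟨m, rfl⟩ : ∃ m', m = m' + 1 := ⟨m - 1, by omega⟩
    rw [add_one_mul] at hx hxm
    exact ⟨m, by omega, by omega, by omega⟩

namespace UniformHypergraph

section SizeRamsey

variable {k r : ℕ}

theorem arrows_self_of_edges_eq_empty {G : UniformHypergraph k} (hG : G.edges = ∅) :
    G.Arrows G := fun _ =>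
  ⟨id, true, ⟨Set.injOn_id _, Set.mapsTo_id _, by simp [hG]⟩, by simp [hG]⟩

theorem sizeRamsey_eq_zero_of_edges_eq_empty {G : UniformHypergraph k} (hG : G.edges = ∅) :
    G.sizeRamsey = 0 :=
  Nat.sInf_eq_zero.2 (Or.inl ⟨G, arrows_self_of_edges_eq_empty hG, by simp [hG]⟩)

theorem sizeRamsey_le_sizeRamsey {G : UniformHypergraph k} {G' : UniformHypergraph r}
    (hG : ∃ H : UniformHypergraph k, H.Arrows G)
    (h : ∀ H : UniformHypergraph k, H.Arrows G →
      ∃ H' : UniformHypergraph r, H'.Arrows G' ∧ H'.edges.card ≤ H.edges.card) :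
    G'.sizeRamsey ≤ G.sizeRamsey := by
  obtain ⟨H₀, hH₀⟩ := hG
  obtain ⟨H, hH, hcard⟩ :
      G.sizeRamsey ∈ {m | ∃ H : UniformHypergraph k, H.Arrows G ∧ H.edges.card = m} :=
    Nat.sInf_mem ⟨_, H₀, hH₀, rfl⟩
  obtain ⟨H', hH', hle⟩ := h H hH
  calc G'.sizeRamsey ≤ H'.edges.card := Nat.sInf_le ⟨H', hH', rfl⟩
    _ ≤ H.edges.card := hle
    _ = G.sizeRamsey := hcard

end SizeRamsey

theorem exists_isCopy_completeHG_pathHG_of_isChain {N n : ℕ} {χ : Finset ℕ → Bool} {c : Bool}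
    {L : List ℕ} (hn : n ≤ L.length) (hL : L.Nodup) (hLN : ∀ x ∈ L, x < N)
    (hχ : L.IsChain fun a b => χ {a, b} = c) :
    ∃ f, (completeHG 2 N).IsCopy (pathHG 2 1 n) f ∧
      ∀ e ∈ (pathHG 2 1 n).edges, χ (e.image f) = c := by
  have himage : ∀ i (hi : i + 2 ≤ n),
      ({i + 1, i + 2} : Finset ℕ).image (fun j => L.getD (j - 1) 0) = {L[i], L[i + 1]} := by
    intro i hi
    simp [List.getD_eq_getElem?_getD, List.getElem?_eq_getElem (by omega : i < L.length),
      List.getElem?_eq_getElem (by omega : i + 1 < L.length)]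
  refine ⟨fun j => L.getD (j - 1) 0, ⟨?_, ?_, ?_⟩, ?_⟩
  · intro x hx y hy hxy
    simp only [pathHG, Finset.coe_Icc, Set.mem_Icc] at hx hy
    simp only [List.getD_eq_getElem _ _ (by omega : x - 1 < L.length),
      List.getD_eq_getElem _ _ (by omega : y - 1 < L.length), hL.getElem_inj_iff] at hxy
    omega
  · intro x hx
    simp only [pathHG, Finset.coe_Icc, Set.mem_Icc] at hx
    show L.getD (x - 1) 0 ∈ Finset.range N
    rw [List.getD_eq_getElem _ _ (by omega : x - 1 < L.length), Finset.mem_range]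
    exact hLN _ (List.getElem_mem _)
  · intro e he
    obtain ⟨i, hi, rfl⟩ := mem_pathHG_two_one_edges.1 he
    rw [himage i hi, completeHG, Finset.mem_powersetCard]
    refine ⟨?_, Finset.card_pair (by simp [hL.getElem_inj_iff])⟩
    simp [Finset.insert_subset_iff, hLN _ (List.getElem_mem _)]
  · intro e he
    obtain ⟨i, hi, rfl⟩ := mem_pathHG_two_one_edges.1 he
    rw [himage i hi]
    exact List.isChain_iff_getElem.1 hχ i (by omega)

theorem completeHG_arrows_pathHG (n : ℕ) : (completeHG 2 (2 * n)).Arrows (pathHG 2 1 n) := by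
  intro χ
  obtain ⟨R, B, hR, hB, hperm⟩ := List.exists_isChain_append_isChain_not_perm
    (r := fun a b => χ {a, b} = true) (fun a b h => by rwa [Finset.pair_comm]) (List.range (2 * n))
  have hnodup : R.Nodup ∧ B.Nodup := by
    have := hperm.nodup_iff.2 List.nodup_range
    exact ⟨this.sublist (List.sublist_append_left _ _),
      this.sublist (List.sublist_append_right _ _)⟩
  have hlt : ∀ x ∈ R ++ B, x < 2 * n := fun x hx => List.mem_range.1 (hperm.subset hx)
  have hlen : R.length + B.length = 2 * n := by simpa using hperm.length_eq
  rcases le_or_gt n R.length with hRn | hBn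
  · obtain ⟨f, hf, hcol⟩ := exists_isCopy_completeHG_pathHG_of_isChain hRn hnodup.1
      (fun x hx => hlt x (List.mem_append_left _ hx)) hR
    exact ⟨f, true, hf, hcol⟩
  · obtain ⟨f, hf, hcol⟩ :=
      exists_isCopy_completeHG_pathHG_of_isChain (n := n) (by omega) hnodup.2
      (fun x hx => hlt x (List.mem_append_right _ hx)) (hB.imp fun a b h => by simpa using h)
    exact ⟨f, false, hf, hcol⟩

/-- `inl (v, j)` is the `j`-th copy of the vertex `v`, `inr (e, j)` the `j`-th vertex added
to the edge `e`. -/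
def blowupVertex : (ℕ × ℕ) ⊕ (Finset ℕ × ℕ) ↪ ℕ :=
  ⟨Encodable.encode, Encodable.encode_injective⟩

def blowupEdge (ℓ m : ℕ) (e : Finset ℕ) : Finset ℕ :=
  ((e ×ˢ Finset.range ℓ).disjSum ({e} ×ˢ Finset.range m)).map blowupVertex

theorem card_blowupEdge (ℓ m : ℕ) (e : Finset ℕ) :
    (blowupEdge ℓ m e).card = e.card * ℓ + m := by
  simp [blowupEdge, Finset.card_product]

theorem mem_blowupEdge {ℓ m z : ℕ} {e : Finset ℕ} :
    z ∈ blowupEdge ℓ m e ↔ (∃ v ∈ e, ∃ j < ℓ, blowupVertex (.inl (v, j)) = z) ∨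
      ∃ j < m, blowupVertex (.inr (e, j)) = z := by
  simp [blowupEdge, Finset.mem_disjSum, and_assoc]

/-- Every vertex of an `r`-graph is replaced by `ℓ` copies and every edge receives
`k - r * ℓ` new vertices of its own. -/
def blowup {r : ℕ} (H : UniformHypergraph r) (ℓ k : ℕ) (h : r * ℓ ≤ k) :
    UniformHypergraph k where
  verts := H.edges.biUnion (blowupEdge ℓ (k - r * ℓ))
  edges := H.edges.image (blowupEdge ℓ (k - r * ℓ))
  card_eq := by
    simp only [Finset.mem_image, forall_exists_index, and_imp, forall_apply_eq_imp_iff₂]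
    intro e he
    rw [card_blowupEdge, H.card_eq e he]
    omega
  subset_verts := by
    simp only [Finset.mem_image, forall_exists_index, and_imp, forall_apply_eq_imp_iff₂]
    exact fun e he => Finset.subset_biUnion_of_mem _ he

/-- Writing `x = i * d + r + 1` with `r < d`, the vertex `x` of the `ℓ`-path goes to a copy of
`f (i + 1)` if `r < ℓ`, and to a new vertex of the edge `{f (i + 1), f (i + 2)}` otherwise. -/
def pathBlowupMap (ℓ d : ℕ) (f : ℕ → ℕ) (x : ℕ) : ℕ :=
  if (x - 1) % d < ℓ then blowupVertex (.inl (f ((x - 1) / d + 1), (x - 1) % d))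
  else blowupVertex (.inr ({f ((x - 1) / d + 1), f ((x - 1) / d + 2)}, (x - 1) % d - ℓ))

theorem pathBlowupMap_apply {ℓ d i r : ℕ} (f : ℕ → ℕ) (hr : r < d) :
    pathBlowupMap ℓ d f (i * d + r + 1) =
      if r < ℓ then blowupVertex (.inl (f (i + 1), r))
      else blowupVertex (.inr ({f (i + 1), f (i + 2)}, r - ℓ)) := by
  have hdiv : (i * d + r) / d = i := by
    rw [add_comm, Nat.add_mul_div_right _ _ (by omega), Nat.div_eq_of_lt hr, zero_add]
  have hmod : (i * d + r) % d = r := by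
    rw [add_comm, Nat.add_mul_mod_self_right, Nat.mod_eq_of_lt hr]
  simp only [pathBlowupMap, Nat.add_sub_cancel, hdiv, hmod]

theorem image_Icc_pathBlowupMap {ℓ d : ℕ} (hℓd : ℓ ≤ d) (f : ℕ → ℕ) (i : ℕ) :
    (Finset.Icc (i * d + 1) (i * d + d + ℓ)).image (pathBlowupMap ℓ d f) =
      blowupEdge ℓ (d - ℓ) {f (i + 1), f (i + 2)} := by
  have hsucc : (i + 1) * d = i * d + d := add_one_mul i d
  ext z
  simp only [Finset.mem_image, Finset.mem_Icc, mem_blowupEdge, Finset.mem_insert,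
    Finset.mem_singleton]
  constructor
  · rintro ⟨x, hx, rfl⟩
    by_cases hxd : x ≤ i * d + d
    · obtain ⟨r, hr, rfl⟩ : ∃ r < d, x = i * d + r + 1 := ⟨x - 1 - i * d, by omega, by omega⟩
      rw [pathBlowupMap_apply f hr]
      split_ifs with hrℓ
      · exact .inl ⟨_, .inl rfl, r, hrℓ, rfl⟩
      · exact .inr ⟨r - ℓ, by omega, rfl⟩
    · obtain ⟨r, hr, rfl⟩ : ∃ r < ℓ, x = (i + 1) * d + r + 1 :=
        ⟨x - 1 - i * d - d, by omega, by omega⟩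
      rw [pathBlowupMap_apply f (by omega), if_pos hr]
      exact .inl ⟨_, .inr rfl, r, hr, rfl⟩
  · rintro (⟨v, hv | hv, j, hj, rfl⟩ | ⟨j, hj, rfl⟩) <;> subst_vars
    · exact ⟨i * d + j + 1, by omega, by rw [pathBlowupMap_apply f (by omega), if_pos hj]⟩
    · exact ⟨(i + 1) * d + j + 1, by omega,
        by rw [pathBlowupMap_apply f (by omega), if_pos hj]⟩
    · refine ⟨i * d + (ℓ + j) + 1, by omega, ?_⟩
      rw [pathBlowupMap_apply f (by omega), if_neg (by omega), Nat.add_sub_cancel_left]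

theorem injOn_pathBlowupMap {ℓ d m : ℕ} {f : ℕ → ℕ} (hℓd : ℓ ≤ d)
    (hf : Set.InjOn f (Set.Icc 1 (m + 1))) :
    Set.InjOn (pathBlowupMap ℓ d f) (Set.Icc 1 (m * d + ℓ)) := by
  intro x hx y hy hxy
  simp only [Set.mem_Icc] at hx hy
  have hf' : ∀ a b, a ≤ m → b ≤ m → f (a + 1) = f (b + 1) → a = b := fun a b ha hb h => by
    have := hf (by simp only [Set.mem_Icc]; omega) (by simp only [Set.mem_Icc]; omega) h
    omega
  suffices (x - 1) / d = (y - 1) / d ∧ (x - 1) % d = (y - 1) % d by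
    have hx' := Nat.div_add_mod (x - 1) d
    have hy' := Nat.div_add_mod (y - 1) d
    rw [this.1, this.2] at hx'
    omega
  have hxm := Nat.div_le_of_lt_mul_add hℓd (show x - 1 < m * d + ℓ by omega)
  have hym := Nat.div_le_of_lt_mul_add hℓd (show y - 1 < m * d + ℓ by omega)
  unfold pathBlowupMap at hxy
  split_ifs at hxy with hrx hry hry <;>
    simp only [EmbeddingLike.apply_eq_iff_eq, reduceCtorEq, Sum.inl.injEq, Sum.inr.injEq,
      Prod.mk.injEq] at hxy
  · exact ⟨hf' _ _ hxm hym hxy.1, hxy.2⟩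
  · obtain ⟨hpair, hr⟩ := hxy
    refine ⟨?_, by omega⟩
    set qx := (x - 1) / d
    set qy := (y - 1) / d
    have hxm' : qx < m := Nat.div_lt_of_lt_mul_add (by omega) (not_lt.1 hrx)
    have hym' : qy < m := Nat.div_lt_of_lt_mul_add (by omega) (not_lt.1 hry)
    have h1 : f (qx + 1) ∈ ({f (qy + 1), f (qy + 2)} : Finset ℕ) :=
      hpair ▸ Finset.mem_insert_self _ _
    have h2 : f (qx + 2) ∈ ({f (qy + 1), f (qy + 2)} : Finset ℕ) :=
      hpair ▸ Finset.mem_insert_of_mem (Finset.mem_singleton_self _)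
    simp only [Finset.mem_insert, Finset.mem_singleton] at h1 h2
    rcases h1 with h1 | h1
    · exact hf' _ _ hxm hym h1
    · have := hf' qx (qy + 1) hxm (by omega) h1
      rcases h2 with h2 | h2
      · have := hf' (qx + 1) qy (by omega) hym h2
        omega
      · have := hf' (qx + 1) (qy + 1) (by omega) (by omega) h2
        omega

theorem mapsTo_verts_of_forall_mem_edges {k : ℕ} {G H : UniformHypergraph k} {f : ℕ → ℕ}
    (hcover : ∀ x ∈ G.verts, ∃ e ∈ G.edges, x ∈ e) (hf : ∀ e ∈ G.edges, e.image f ∈ H.edges) :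
    Set.MapsTo f G.verts H.verts := fun x hx => by
  obtain ⟨e, he, hxe⟩ := hcover x hx
  exact H.subset_verts _ (hf e he) (Finset.mem_image_of_mem f hxe)

theorem blowup_arrows_pathHG {d ℓ m : ℕ} (hℓ : 1 ≤ ℓ) (hk : 2 * ℓ ≤ d + ℓ) (hm : 0 < m)
    {H : UniformHypergraph 2} (hH : H.Arrows (pathHG 2 1 (m * d + ℓ))) :
    (H.blowup ℓ (d + ℓ) hk).Arrows (pathHG (d + ℓ) ℓ (m * d + ℓ)) := by
  intro χ
  obtain ⟨f, c, ⟨hinj, -, hedges⟩, hcol⟩ := hH (χ ∘ blowupEdge ℓ (d - ℓ))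
  have hd : 0 < d := by omega
  have hmd : m ≤ m * d := Nat.le_mul_of_pos_right m hd
  have hpath : ∀ e ∈ (pathHG (d + ℓ) ℓ (m * d + ℓ)).edges,
      e.image (pathBlowupMap ℓ d f) ∈ (H.blowup ℓ (d + ℓ) hk).edges ∧
        χ (e.image (pathBlowupMap ℓ d f)) = c := by
    simp only [mem_pathHG_edges hd, forall_exists_index, and_imp]
    rintro _ i hi rfl
    have hpair : ({i + 1, i + 2} : Finset ℕ) ∈ (pathHG 2 1 (m * d + ℓ)).edges :=
      mem_pathHG_two_one_edges.2 ⟨i, by omega, rfl⟩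
    have hedge := hedges _ hpair
    have hχ := hcol _ hpair
    simp only [Finset.image_insert, Finset.image_singleton, Function.comp_apply] at hedge hχ
    rw [image_Icc_pathBlowupMap (by omega)]
    refine ⟨Finset.mem_image.2 ⟨_, hedge, ?_⟩, hχ⟩
    rw [show d + ℓ - 2 * ℓ = d - ℓ by omega]
  have hinj' : Set.InjOn (pathBlowupMap ℓ d f) (Set.Icc 1 (m * d + ℓ)) := by
    refine injOn_pathBlowupMap (by omega) (hinj.mono ?_)
    simp only [pathHG, Finset.coe_Icc]
    exact Set.Icc_subset_Icc_right (by omega)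
  refine ⟨pathBlowupMap ℓ d f, c, ⟨by simpa only [pathHG, Finset.coe_Icc] using hinj',
    mapsTo_verts_of_forall_mem_edges (fun x hx => exists_mem_edges_pathHG hd hm hx)
      (fun e he => (hpath e he).1), fun e he => (hpath e he).1⟩, fun e he => (hpath e he).2⟩

end UniformHypergraph

/-- For `1 ≤ ℓ ≤ k/2` and `n ≡ ℓ (mod k−ℓ)`,
`R̂(P^(k)_{n,ℓ}) ≤ R̂(P_n)`, where `P_n = P^(2)_{n,1}` is the graph path on `n` vertices. -/
theorem stmt3 (k ℓ n : ℕ) (h1 : 1 ≤ ℓ) (h2 : 2 * ℓ ≤ k)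
    (hmod : n % (k - ℓ) = ℓ % (k - ℓ)) :
    UniformHypergraph.sizeRamsey (pathHG k ℓ n) ≤ UniformHypergraph.sizeRamsey (pathHG 2 1 n) := by
  obtain ⟨d, rfl⟩ : ∃ d, k = d + ℓ := ⟨k - ℓ, by omega⟩
  rw [Nat.add_sub_cancel] at hmod
  rcases Nat.eq_zero_or_pos ((n - ℓ) / d) with hq | hq
  · rw [UniformHypergraph.sizeRamsey_eq_zero_of_edges_eq_empty (by simp [pathHG, hq])]
    exact Nat.zero_le _
  obtain ⟨m, hm, rfl⟩ : ∃ m, 0 < m ∧ n = m * d + ℓ := by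
    have hℓn : ℓ < n := Nat.sub_pos_iff_lt.1 (Nat.pos_of_div_pos hq)
    refine ⟨_, hq, ?_⟩
    rw [Nat.div_mul_cancel (Nat.dvd_of_mod_eq_zero (Nat.sub_mod_eq_zero_of_mod_eq hmod))]
    omega
  exact UniformHypergraph.sizeRamsey_le_sizeRamsey
    ⟨_, UniformHypergraph.completeHG_arrows_pathHG _⟩ fun H hH =>
      ⟨H.blowup ℓ (d + ℓ) h2, UniformHypergraph.blowup_arrows_pathHG h1 h2 hm hH,
        Finset.card_image_le⟩
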